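/- arXiv:1106.5746 — 2 statements merged into one kernel-verified Lean document; each statement's English description precedes it below -/
import Mathlib

section
/- Let A be an index type, d ≥ 1 a natural number, and a : (A →₀ ℕ) → ℝ a superexponential d-regular admissible positive function; set A_d = (∑_α a_α^{−d})^{1/2} (a finite number). Let f : (A →₀ ℕ) → ℂ with ‖f‖_p < ∞ for some p ∈ ℕ. Then for every n ∈ ℕ the n-th convolution power f^{*n} satisfies ‖f^{*n}‖_{p+d} ≤ A_d^{n} · ‖f‖_p^{n}. -/
/-!
Superexponentiality gives `a_α ≥ ∏ₙ a_{eₙ} ^ αₙ`, so `∑_α a_α ^ (-d)` is dominated by the Euler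
product `∏ₙ (1 - a_{eₙ} ^ (-d))⁻¹ = ∏ₙ (1 + 1 / (a_{eₙ} ^ d - 1)) ≤ exp (∑ₙ 1 / (a_{eₙ} ^ d - 1))`,
which is finite by `d`-regularity; hence `A_d < ∞`. For one convolution step, Cauchy–Schwarz on
`(f * g)_γ = ∑_{α+β=γ} a_α ^ (-d/2) · (a_α ^ (d/2) f_α g_β)` together with `a_α a_β ≤ a_γ` gives
`‖f * g‖_{p+d} ≤ A_d ‖f‖_p ‖g‖_{p+d}`, and induction on `n` finishes.
-/

open scoped ENNReal

/-- The convolution (Cauchy product) of two families indexed by the free commutative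
monoid `A →₀ ℕ`, i.e. multiplication in `MvPowerSeries A ℂ`. -/
noncomputable def conv {A : Type*} [DecidableEq A] (f g : (A →₀ ℕ) → ℂ) : (A →₀ ℕ) → ℂ :=
  fun γ => ∑ x ∈ Finset.HasAntidiagonal.antidiagonal γ, f x.1 * g x.2

/-- The `n`-th convolution power: `f^{*0} = 1` (the indicator of `α = 0`) and
`f^{*(n+1)} = f * f^{*n}`. -/
noncomputable def convPow {A : Type*} [DecidableEq A] (f : (A →₀ ℕ) → ℂ) : ℕ → (A →₀ ℕ) → ℂ
  | 0 => fun γ => if γ = 0 then 1 else 0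
  | n + 1 => conv f (convPow f n)

/-- The squared weighted `ℓ²`-norm `‖f‖_p² = ∑' α, |f α|² a α ^ (-p)`, as a sum in `[0,∞]`. -/
noncomputable def wsum {A : Type*} (a : (A →₀ ℕ) → ℝ) (p : ℕ) (f : (A →₀ ℕ) → ℂ) : ℝ≥0∞ :=
  ∑' α, ENNReal.ofReal (‖f α‖ ^ 2 / (a α) ^ p)

/-- The weighted `ℓ²`-norm `‖f‖_p`, with values in `[0,∞]`. -/
noncomputable def wnorm {A : Type*} (a : (A →₀ ℕ) → ℝ) (p : ℕ) (f : (A →₀ ℕ) → ℂ) : ℝ≥0∞ :=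
  (wsum a p f) ^ (2⁻¹ : ℝ)

open Finset

theorem Finset.sum_finsupp_prod_eq_prod_sum {ι α R : Type*} [Zero α] [CommSemiring R]
    (s : Finset ι) (t : ι → Finset α) (g : ι → α → R) :
    ∑ f ∈ s.finsupp t, ∏ i ∈ s, g i (f i) = ∏ i ∈ s, ∑ k ∈ t i, g i k := by
  classical
  rw [Finset.finsupp, sum_map, prod_sum]
  refine sum_congr rfl fun q _ => ?_
  rw [← prod_attach s]
  exact prod_congr rfl fun i _ => by simp [Finsupp.indicator_of_mem i.2]

theorem Finset.sum_antidiagonal_fst_le_tsum {M : Type*} [AddMonoid M] [IsLeftCancelAdd M]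
    [HasAntidiagonal M] {g : M → ℝ} (hg : ∀ x, 0 ≤ g x) (hsum : Summable g) (γ : M) :
    ∑ x ∈ antidiagonal γ, g x.1 ≤ ∑' x, g x := by
  classical
  have hinj : Set.InjOn Prod.fst (antidiagonal γ : Set (M × M)) := fun x hx y hy h =>
    Prod.ext h (add_left_cancel (h ▸ (mem_antidiagonal.1 hx).trans (mem_antidiagonal.1 hy).symm))
  rw [← sum_image hinj]
  exact hsum.sum_le_tsum _ fun x _ => hg x

theorem ENNReal.tsum_mul_tsum_eq_tsum_sum_antidiagonal {M : Type*} [AddMonoid M]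
    [HasAntidiagonal M] (u v : M → ℝ≥0∞) :
    (∑' x, u x) * ∑' y, v y = ∑' γ, ∑ x ∈ antidiagonal γ, u x.1 * v x.2 := by
  simp_rw [← ENNReal.tsum_mul_right, ← ENNReal.tsum_mul_left]
  rw [← ENNReal.tsum_prod (f := fun x y => u x * v y),
    ← HasAntidiagonal.sigmaAntidiagonalEquivProd.tsum_eq, ENNReal.tsum_sigma']
  exact tsum_congr fun γ => Finset.tsum_subtype (antidiagonal γ) fun x => u x.1 * v x.2

section Supermultiplicative

variable {M : Type*} [AddCommMonoid M] {b : M → ℝ}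

theorem prod_le_apply_sum_of_supermul (hb : ∀ x, 0 ≤ b x) (h0 : b 0 = 1)
    (hsup : ∀ x y, b x * b y ≤ b (x + y)) {ι : Type*} (s : Finset ι) (x : ι → M) :
    ∏ i ∈ s, b (x i) ≤ b (∑ i ∈ s, x i) := by
  classical
  induction s using Finset.induction_on with
  | empty => simp [h0]
  | insert i s hi ih =>
    rw [prod_insert hi, sum_insert hi]
    exact (mul_le_mul_of_nonneg_left ih (hb _)).trans (hsup _ _)

theorem pow_le_apply_nsmul_of_supermul (hb : ∀ x, 0 ≤ b x) (h0 : b 0 = 1)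
    (hsup : ∀ x y, b x * b y ≤ b (x + y)) (x : M) (k : ℕ) :
    b x ^ k ≤ b (k • x) := by
  simpa using prod_le_apply_sum_of_supermul hb h0 hsup (range k) fun _ => x

end Supermultiplicative

section Summability

variable {A : Type*} {b : (A →₀ ℕ) → ℝ}

theorem prod_pow_apply_single_le_of_supermul (hb : ∀ α, 0 ≤ b α) (h0 : b 0 = 1)
    (hsup : ∀ α β, b α * b β ≤ b (α + β)) {α : A →₀ ℕ} {s : Finset A}
    (hs : α.support ⊆ s) :
    ∏ n ∈ s, b (Finsupp.single n 1) ^ α n ≤ b α :=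
  calc ∏ n ∈ s, b (Finsupp.single n 1) ^ α n
      ≤ ∏ n ∈ s, b (α n • Finsupp.single n 1) :=
        prod_le_prod (fun _ _ => pow_nonneg (hb _) _)
          fun n _ => pow_le_apply_nsmul_of_supermul hb h0 hsup _ _
    _ ≤ b (∑ n ∈ s, α n • Finsupp.single n 1) := prod_le_apply_sum_of_supermul hb h0 hsup _ _
    _ = b α := by
      simp_rw [Finsupp.smul_single_one]
      rw [← Finsupp.sum_of_support_subset α hs _ fun _ _ => Finsupp.single_zero _,
        Finsupp.sum_single]

theorem summable_one_div_of_supermul (hpos : ∀ α, 0 < b α) (h0 : b 0 = 1)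
    (hgen : ∀ n, 1 < b (Finsupp.single n 1))
    (hreg : Summable fun n => 1 / (b (Finsupp.single n 1) - 1))
    (hsup : ∀ α β, b α * b β ≤ b (α + β)) :
    Summable fun α => 1 / b α := by
  set c : A → ℝ := fun n => 1 / (b (Finsupp.single n 1) - 1)
  set r : A → ℝ := fun n => (b (Finsupp.single n 1))⁻¹
  have hc : ∀ n, 0 ≤ c n := fun n => (one_div_pos.2 (sub_pos.2 (hgen n))).le
  have hr : ∀ n, 0 ≤ r n := fun n => inv_nonneg.2 (hpos _).le
  have hgeom : ∀ n N, ∑ k ∈ range N, r n ^ k ≤ 1 + c n := fun n N => by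
    rw [range_eq_Ico]
    refine (geom_sum_Ico_le_of_lt_one (hr n) (inv_lt_one_of_one_lt₀ (hgen n))).trans_eq ?_
    have hb : b (Finsupp.single n 1) ≠ 0 := (hpos _).ne'
    have hb1 : b (Finsupp.single n 1) - 1 ≠ 0 := sub_ne_zero.2 (hgen n).ne'
    simp only [c, r]
    field_simp
    ring
  refine _root_.summable_of_sum_le (c := Real.exp (∑' n, c n))
    (fun α => (one_div_pos.2 (hpos α)).le) fun F => ?_
  set m := F.sup id
  set T := m.support.finsupp fun n => range (m n + 1)
  have hFT : F ⊆ T := fun α hα => by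
    have hle : α ≤ m := le_sup (f := id) hα
    exact mem_finsupp_iff.2
      ⟨Finsupp.support_mono hle, fun n _ => mem_range.2 (Nat.lt_succ_of_le (hle n))⟩
  calc ∑ α ∈ F, 1 / b α ≤ ∑ α ∈ F, ∏ n ∈ m.support, r n ^ α n := sum_le_sum fun α hα => by
        simp only [one_div, r, inv_pow, prod_inv_distrib]
        exact inv_anti₀ (prod_pos fun n _ => pow_pos (hpos _) _)
          (prod_pow_apply_single_le_of_supermul (fun α => (hpos α).le) h0 hsup
            (Finsupp.support_mono (le_sup (f := id) hα)))
    _ ≤ ∑ α ∈ T, ∏ n ∈ m.support, r n ^ α n :=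
        sum_le_sum_of_subset_of_nonneg hFT fun _ _ _ => prod_nonneg fun n _ => pow_nonneg (hr n) _
    _ = ∏ n ∈ m.support, ∑ k ∈ range (m n + 1), r n ^ k :=
        sum_finsupp_prod_eq_prod_sum _ _ fun n k => r n ^ k
    _ ≤ ∏ n ∈ m.support, (1 + c n) :=
        prod_le_prod (fun n _ => sum_nonneg fun k _ => pow_nonneg (hr n) k) fun n _ => hgeom n _
    _ ≤ Real.exp (∑ n ∈ m.support, c n) := Real.prod_one_add_le_exp_sum _ hc
    _ ≤ Real.exp (∑' n, c n) := Real.exp_le_exp.2 (hreg.sum_le_tsum _ fun n _ => hc n)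

end Summability

section Convolution

variable {A : Type*} [DecidableEq A] {a : (A →₀ ℕ) → ℝ}

theorem norm_conv_sq_le (hpos : ∀ α, 0 < a α) (d : ℕ) (f g : (A →₀ ℕ) → ℂ) (γ : A →₀ ℕ) :
    ‖conv f g γ‖ ^ 2 ≤ (∑ x ∈ antidiagonal γ, 1 / a x.1 ^ d)
      * ∑ x ∈ antidiagonal γ, a x.1 ^ d * (‖f x.1‖ * ‖g x.2‖) ^ 2 := by
  have htri : ‖conv f g γ‖ ≤ ∑ x ∈ antidiagonal γ, ‖f x.1‖ * ‖g x.2‖ :=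
    (norm_sum_le _ _).trans_eq (by simp_rw [norm_mul])
  refine (pow_le_pow_left₀ (norm_nonneg _) htri 2).trans
    (sum_sq_le_sum_mul_sum_of_sq_le_mul _ (fun x _ => (one_div_pos.2 (pow_pos (hpos x.1) d)).le)
      (fun x _ => mul_nonneg (pow_pos (hpos x.1) d).le (sq_nonneg _)) fun x _ => ?_)
  rw [one_div, inv_mul_cancel_left₀ (pow_pos (hpos x.1) d).ne']

theorem norm_conv_sq_div_le (hpos : ∀ α, 0 < a α) (hsup : ∀ α β, a α * a β ≤ a (α + β))
    {d : ℕ} (hsum : Summable fun α => 1 / a α ^ d) (f g : (A →₀ ℕ) → ℂ) (p : ℕ) (γ : A →₀ ℕ) :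
    ‖conv f g γ‖ ^ 2 / a γ ^ (p + d) ≤ (∑' α, 1 / a α ^ d)
      * ∑ x ∈ antidiagonal γ, ‖f x.1‖ ^ 2 / a x.1 ^ p * (‖g x.2‖ ^ 2 / a x.2 ^ (p + d)) := by
  have hterm : ∀ x ∈ antidiagonal γ, a x.1 ^ d * (‖f x.1‖ * ‖g x.2‖) ^ 2 / a γ ^ (p + d)
      ≤ ‖f x.1‖ ^ 2 / a x.1 ^ p * (‖g x.2‖ ^ 2 / a x.2 ^ (p + d)) := fun x hx => by
    have h1 := hpos x.1
    have h2 := hpos x.2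
    have hle : a x.1 * a x.2 ≤ a γ := mem_antidiagonal.1 hx ▸ hsup x.1 x.2
    calc a x.1 ^ d * (‖f x.1‖ * ‖g x.2‖) ^ 2 / a γ ^ (p + d)
        ≤ a x.1 ^ d * (‖f x.1‖ * ‖g x.2‖) ^ 2 / (a x.1 * a x.2) ^ (p + d) := by gcongr
      _ = ‖f x.1‖ ^ 2 / a x.1 ^ p * (‖g x.2‖ ^ 2 / a x.2 ^ (p + d)) := by
        field_simp
        ring
  calc ‖conv f g γ‖ ^ 2 / a γ ^ (p + d)
      ≤ (∑ x ∈ antidiagonal γ, 1 / a x.1 ^ d)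
        * ∑ x ∈ antidiagonal γ, a x.1 ^ d * (‖f x.1‖ * ‖g x.2‖) ^ 2 / a γ ^ (p + d) := by
        rw [← sum_div, ← mul_div_assoc]
        exact div_le_div_of_nonneg_right (norm_conv_sq_le hpos d f g γ) (pow_pos (hpos γ) _).le
    _ ≤ _ := by
        have hnonneg : ∀ α, 0 ≤ 1 / a α ^ d := fun α => (one_div_pos.2 (pow_pos (hpos α) d)).le
        refine mul_le_mul (sum_antidiagonal_fst_le_tsum hnonneg hsum γ) (sum_le_sum hterm)
          (sum_nonneg fun x _ => ?_) (tsum_nonneg hnonneg)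
        have := hpos x.1
        have := hpos γ
        positivity

theorem wsum_conv_le (hpos : ∀ α, 0 < a α) (hsup : ∀ α β, a α * a β ≤ a (α + β))
    {d : ℕ} (hsum : Summable fun α => 1 / a α ^ d) (f g : (A →₀ ℕ) → ℂ) (p : ℕ) :
    wsum a (p + d) (conv f g)
      ≤ ENNReal.ofReal (∑' α, 1 / a α ^ d) * (wsum a p f * wsum a (p + d) g) := by
  have hS : 0 ≤ ∑' α, 1 / a α ^ d := tsum_nonneg fun α => (one_div_pos.2 (pow_pos (hpos α) d)).le
  have hterm : ∀ q (h : (A →₀ ℕ) → ℂ) α, 0 ≤ ‖h α‖ ^ 2 / a α ^ q := fun q h α => by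
    have := hpos α
    positivity
  rw [wsum, wsum, wsum, ENNReal.tsum_mul_tsum_eq_tsum_sum_antidiagonal, ← ENNReal.tsum_mul_left]
  refine ENNReal.tsum_le_tsum fun γ => ?_
  simp_rw [← ENNReal.ofReal_mul (hterm _ _ _)]
  rw [← ENNReal.ofReal_sum_of_nonneg fun x _ => mul_nonneg (hterm _ _ _) (hterm _ _ _),
    ← ENNReal.ofReal_mul hS]
  exact ENNReal.ofReal_le_ofReal (norm_conv_sq_div_le hpos hsup hsum f g p γ)

theorem wnorm_conv_le (hpos : ∀ α, 0 < a α) (hsup : ∀ α β, a α * a β ≤ a (α + β))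
    {d : ℕ} (hsum : Summable fun α => 1 / a α ^ d) (f g : (A →₀ ℕ) → ℂ) (p : ℕ) :
    wnorm a (p + d) (conv f g)
      ≤ ENNReal.ofReal (Real.sqrt (∑' α, 1 / a α ^ d)) * (wnorm a p f * wnorm a (p + d) g) := by
  have hS : 0 ≤ ∑' α, 1 / a α ^ d := tsum_nonneg fun α => (one_div_pos.2 (pow_pos (hpos α) d)).le
  have hhalf : (0 : ℝ) ≤ 2⁻¹ := by norm_num
  calc wnorm a (p + d) (conv f g)
      ≤ (ENNReal.ofReal (∑' α, 1 / a α ^ d) * (wsum a p f * wsum a (p + d) g)) ^ (2⁻¹ : ℝ) :=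
        ENNReal.rpow_le_rpow (wsum_conv_le hpos hsup hsum f g p) hhalf
    _ = _ := by
        rw [ENNReal.mul_rpow_of_nonneg _ _ hhalf, ENNReal.mul_rpow_of_nonneg _ _ hhalf,
          ENNReal.ofReal_rpow_of_nonneg hS hhalf, Real.sqrt_eq_rpow, one_div, wnorm, wnorm]

theorem wnorm_convPow_zero (h0 : a 0 = 1) (q : ℕ) (f : (A →₀ ℕ) → ℂ) :
    wnorm a q (convPow f 0) = 1 := by
  rw [wnorm, wsum, tsum_eq_single 0 fun γ hγ => by simp [convPow, hγ]]
  simp [convPow, h0]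

end Convolution

theorem wnorm_convPow_le_general {A : Type*} [DecidableEq A]
    (d : ℕ) (hd : 1 ≤ d) (a : (A →₀ ℕ) → ℝ)
    (hpos : ∀ α, 0 < a α)
    (h0 : a 0 = 1)
    (hgen : ∀ n : A, 1 < a (Finsupp.single n 1))
    (hreg : Summable fun n : A => 1 / ((a (Finsupp.single n 1)) ^ d - 1))
    (hsup : ∀ α β : A →₀ ℕ, a α * a β ≤ a (α + β))
    (f : (A →₀ ℕ) → ℂ) (p : ℕ) :
    ∀ n : ℕ, wnorm a (p + d) (convPow f n)
      ≤ (ENNReal.ofReal (Real.sqrt (∑' α : A →₀ ℕ, 1 / (a α) ^ d))) ^ n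
          * (wnorm a p f) ^ n := by
  have hsum : Summable fun α => 1 / a α ^ d :=
    summable_one_div_of_supermul (b := fun α => a α ^ d) (fun α => pow_pos (hpos α) d)
      (by simp [h0]) (fun n => one_lt_pow₀ (hgen n) (by omega)) hreg fun α β => by
        rw [← mul_pow]
        exact pow_le_pow_left₀ (mul_pos (hpos α) (hpos β)).le (hsup α β) d
  intro n
  induction n with
  | zero => simp [wnorm_convPow_zero h0]
  | succ n ih =>
    calc wnorm a (p + d) (convPow f (n + 1))
        ≤ _ * (wnorm a p f * wnorm a (p + d) (convPow f n)) :=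
          wnorm_conv_le hpos hsup hsum f (convPow f n) p
      _ ≤ _ * (wnorm a p f * (_ ^ n * wnorm a p f ^ n)) := by gcongr
      _ = _ := by ring

/-- For a superexponential `d`-regular admissible positive function `a` and `f` with
`‖f‖_p < ∞`, the convolution powers satisfy `‖f^{*n}‖_{p+d} ≤ A_d ^ n ⬝ ‖f‖_p ^ n`,
where `A_d = (∑_α a α ^ (-d))^{1/2}`. -/
theorem wnorm_convPow_le {A : Type*} [DecidableEq A]
    (d : ℕ) (hd : 1 ≤ d) (a : (A →₀ ℕ) → ℝ)
    (hpos : ∀ α, 0 < a α)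
    (h0 : a 0 = 1)
    (hgen : ∀ n : A, 1 < a (Finsupp.single n 1))
    (hreg : Summable fun n : A => 1 / ((a (Finsupp.single n 1)) ^ d - 1))
    (hsup : ∀ α β : A →₀ ℕ, a α * a β ≤ a (α + β))
    (f : (A →₀ ℕ) → ℂ) (p : ℕ) (hf : wnorm a p f < ⊤) :
    ∀ n : ℕ, wnorm a (p + d) (convPow f n)
      ≤ (ENNReal.ofReal (Real.sqrt (∑' α : A →₀ ℕ, 1 / (a α) ^ d))) ^ n
          * (wnorm a p f) ^ n :=
  wnorm_convPow_le_general d hd a hpos h0 hgen hreg hsup f p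
end

section
/- (The space 𝒢′ extending the tempered distributions is a Våge space) Let p, q ∈ ℕ with p ≥ q + 1, and let f, g : ℕ → ℂ with ∑_m |f_m|² 2^{−mq} < ∞ and ∑_n |g_n|² 2^{−np} < ∞. Then ∑_n |∑_{m=0}^{n} f_m g_{n−m}|² 2^{−np} ≤ (1/(1 − 2^{−(p−q)})) · (∑_m |f_m|² 2^{−mq}) · (∑_n |g_n|² 2^{−np}). -/
/-! Each term of the convolution is bounded by the Cauchy–Schwarz inequality with the geometric
weights `2^{-k(p-q)}` on the antidiagonal `k + l = n`. These weights sum to at most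
`1/(1 - 2^{-(p-q)})`, and `2^{np} = 2^{kq} · 2^{lp} · 2^{k(p-q)}` turns what remains into the
`n`-th term of the Cauchy product of the two weighted series. In `ℝ≥0∞` the Cauchy product formula
holds unconditionally, so no convergence of either series is needed. -/

open scoped ENNReal
open Finset

theorem ENNReal.tsum_mul_tsum_eq_tsum_sum_antidiagonal_s15 (f g : ℕ → ℝ≥0∞) :
    (∑' n, f n) * ∑' n, g n = ∑' n, ∑ kl ∈ antidiagonal n, f kl.1 * g kl.2 := by
  simp_rw [← ENNReal.tsum_mul_right, ← ENNReal.tsum_mul_left]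
  rw [← ENNReal.tsum_prod (f := fun k l => f k * g l),
    ← HasAntidiagonal.sigmaAntidiagonalEquivProd.tsum_eq, ENNReal.tsum_sigma']
  exact tsum_congr fun n => Finset.tsum_subtype _ fun kl : ℕ × ℕ => f kl.1 * g kl.2

theorem Finset.Nat.sum_antidiagonal_inv_pow_fst_le {c : ℝ} (hc : 1 < c) (n : ℕ) :
    ∑ kl ∈ antidiagonal n, (c ^ kl.1)⁻¹ ≤ (1 - c⁻¹)⁻¹ := by
  rw [Nat.sum_antidiagonal_eq_sum_range_succ_mk, range_eq_Ico, ← one_div]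
  simpa only [inv_pow, pow_zero, inv_one] using
    geom_sum_Ico_le_of_lt_one (m := 0) (n := n + 1) (inv_nonneg.2 (zero_le_one.trans hc.le))
      (inv_lt_one_of_one_lt₀ hc)

theorem Finset.sq_sum_le_sum_mul_sum_sq_div {ι : Type*} (s : Finset ι) (x : ι → ℝ) {w : ι → ℝ}
    (hw : ∀ i ∈ s, 0 < w i) : (∑ i ∈ s, x i) ^ 2 ≤ (∑ i ∈ s, w i) * ∑ i ∈ s, x i ^ 2 / w i := by
  rcases s.eq_empty_or_nonempty with rfl | hs
  · simp
  rw [← div_le_iff₀' (sum_pos hw hs)]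
  exact sq_sum_div_le_sum_sq_div s x hw

theorem norm_sum_antidiagonal_mul_sq_div_pow_le {R : Type*} [SeminormedRing R]
    {b : ℝ} (hb : 1 < b) {p q : ℕ} (hqp : q < p) (f g : ℕ → R) (n : ℕ) :
    ‖∑ kl ∈ antidiagonal n, f kl.1 * g kl.2‖ ^ 2 / b ^ (n * p)
      ≤ (1 - (b ^ (p - q))⁻¹)⁻¹ *
        ∑ kl ∈ antidiagonal n, ‖f kl.1‖ ^ 2 / b ^ (kl.1 * q) * (‖g kl.2‖ ^ 2 / b ^ (kl.2 * p)) := by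
  set c := b ^ (p - q)
  have hc : 1 < c := one_lt_pow₀ hb (Nat.sub_ne_zero_of_lt hqp)
  set x : ℕ × ℕ → ℝ := fun kl => ‖f kl.1‖ * ‖g kl.2‖
  have hnorm : ‖∑ kl ∈ antidiagonal n, f kl.1 * g kl.2‖ ≤ ∑ kl ∈ antidiagonal n, x kl :=
    (norm_sum_le _ _).trans (sum_le_sum fun kl _ => norm_mul_le _ _)
  have hsplit : ∀ kl ∈ antidiagonal n, b ^ (n * p) = b ^ (kl.1 * q) * b ^ (kl.2 * p) * c ^ kl.1 := by
    rintro ⟨k, l⟩ hkl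
    obtain rfl : k + l = n := mem_antidiagonal.1 hkl
    obtain ⟨d, rfl⟩ := Nat.exists_eq_add_of_le hqp.le
    simp only [c, Nat.add_sub_cancel_left, ← pow_mul, ← pow_add]
    ring_nf
  calc ‖∑ kl ∈ antidiagonal n, f kl.1 * g kl.2‖ ^ 2 / b ^ (n * p)
      ≤ (∑ kl ∈ antidiagonal n, x kl) ^ 2 / b ^ (n * p) := by gcongr
    _ ≤ (∑ kl ∈ antidiagonal n, (c ^ kl.1)⁻¹) * (∑ kl ∈ antidiagonal n, x kl ^ 2 / (c ^ kl.1)⁻¹)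
          / b ^ (n * p) := by
        gcongr
        exact sq_sum_le_sum_mul_sum_sq_div _ _ fun kl _ => by positivity
    _ ≤ (1 - c⁻¹)⁻¹ * (∑ kl ∈ antidiagonal n, x kl ^ 2 / (c ^ kl.1)⁻¹) / b ^ (n * p) := by
        gcongr
        exact Nat.sum_antidiagonal_inv_pow_fst_le hc n
    _ = (1 - c⁻¹)⁻¹ * ∑ kl ∈ antidiagonal n,
          ‖f kl.1‖ ^ 2 / b ^ (kl.1 * q) * (‖g kl.2‖ ^ 2 / b ^ (kl.2 * p)) := by
        rw [mul_div_assoc, sum_div]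
        congr 1
        refine sum_congr rfl fun kl hkl => ?_
        rw [hsplit kl hkl]
        simp only [x]
        field_simp

theorem G_prime_vage_inequality_general
    (p q : ℕ) (hpq : q + 1 ≤ p) (f g : ℕ → ℂ) :
    (∑' n : ℕ, ENNReal.ofReal
        (‖∑ m ∈ Finset.range (n + 1), f m * g (n - m)‖ ^ 2 / 2 ^ (n * p)))
      ≤ ENNReal.ofReal ((1 - ((2 : ℝ) ^ (p - q))⁻¹)⁻¹)
          * (∑' m : ℕ, ENNReal.ofReal (‖f m‖ ^ 2 / 2 ^ (m * q)))
          * (∑' n : ℕ, ENNReal.ofReal (‖g n‖ ^ 2 / 2 ^ (n * p))) := by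
  have hC : 0 ≤ (1 - ((2 : ℝ) ^ (p - q))⁻¹)⁻¹ :=
    inv_nonneg.2 (sub_nonneg.2 (inv_le_one_of_one_le₀ (one_le_pow₀ one_le_two)))
  simp_rw [← Nat.sum_antidiagonal_eq_sum_range_succ fun k l => f k * g l]
  rw [mul_assoc, ENNReal.tsum_mul_tsum_eq_tsum_sum_antidiagonal_s15, ← ENNReal.tsum_mul_left]
  refine ENNReal.tsum_le_tsum fun n => (ENNReal.ofReal_le_ofReal
    (norm_sum_antidiagonal_mul_sq_div_pow_le one_lt_two hpq f g n)).trans_eq ?_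
  rw [ENNReal.ofReal_mul hC, ENNReal.ofReal_sum_of_nonneg fun _ _ => by positivity]
  simp_rw [ENNReal.ofReal_mul (div_nonneg (sq_nonneg _) (pow_nonneg zero_le_two _))]

/-- (The space `𝒢′` extending the tempered distributions is a Våge space.)
For the exponential weights `a n = 2 ^ n` and `p ≥ q + 1`, the convolution satisfies
the Våge inequality with constant `∑_{k ≥ 0} 2^{-k(p-q)} = 1 / (1 - 2^{-(p-q)})`. -/
theorem G_prime_vage_inequality
    (p q : ℕ) (hpq : q + 1 ≤ p) (f g : ℕ → ℂ)
    (hf : (∑' m : ℕ, ENNReal.ofReal (‖f m‖ ^ 2 / 2 ^ (m * q))) < ⊤)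
    (hg : (∑' n : ℕ, ENNReal.ofReal (‖g n‖ ^ 2 / 2 ^ (n * p))) < ⊤) :
    (∑' n : ℕ, ENNReal.ofReal
        (‖∑ m ∈ Finset.range (n + 1), f m * g (n - m)‖ ^ 2 / 2 ^ (n * p)))
      ≤ ENNReal.ofReal ((1 - ((2 : ℝ) ^ (p - q))⁻¹)⁻¹)
          * (∑' m : ℕ, ENNReal.ofReal (‖f m‖ ^ 2 / 2 ^ (m * q)))
          * (∑' n : ℕ, ENNReal.ofReal (‖g n‖ ^ 2 / 2 ^ (n * p))) :=
  G_prime_vage_inequality_general p q hpq f g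
end
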